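/- Let f : ℝ → ℂ be in L²(ℝ), and define its quantum characteristic function χ : ℝ² → ℂ by χ(a, b) = ∫_ℝ conj(f(x)) · exp(i(b x − a b / 2)) · f(x − a) dx (this integral converges absolutely since f ∈ L²). Then χ is 1-positive definite: for every m ∈ ℕ and every choice of points ξ_k = (a_k, b_k) ∈ ℝ², k = 1, …, m, the m × m complex matrix M with entries M_{k,l} = exp(i (a_k b_l − a_l b_k)/2) · χ(a_l − a_k, b_l − b_k) is positive semidefinite. (This is the easy direction of the quantum Bochner theorem, assertion (i), for pure states: every characteristic function of a quantum state is 1-positive definite; the proof exhibits M as the Gram matrix of the vectors D(ξ_k) f.) -/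

import Mathlib

open MeasureTheory
open scoped BigOperators ComplexOrder ComplexConjugate

/-!
The matrix `M` is the Gram matrix of the displaced states `D(ξ_k) f` in `L²(ℝ)`: the Weyl relation
`D(ξ)* D(ξ') = e^{iσ(ξ,ξ')/2} D(ξ' - ξ)` turns `⟨D(ξ_k) f, D(ξ_l) f⟩` into
`e^{iσ(ξ_k,ξ_l)/2} χ(ξ_l - ξ_k)`, and Gram matrices are positive semidefinite.
-/

theorem MemLp.inner_toLp_toLp {α 𝕜 E : Type*} [MeasurableSpace α] {μ : Measure α} [RCLike 𝕜]
    [NormedAddCommGroup E] [InnerProductSpace 𝕜 E] {f g : α → E} (hf : MemLp f 2 μ)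
    (hg : MemLp g 2 μ) :
    inner 𝕜 (hf.toLp f) (hg.toLp g) = ∫ x, inner 𝕜 (f x) (g x) ∂μ := by
  rw [L2.inner_def]
  refine integral_congr_ae ?_
  filter_upwards [hf.coeFn_toLp, hg.coeFn_toLp] with x hfx hgx
  rw [hfx, hgx]

noncomputable def weylOp (a b : ℝ) (f : ℝ → ℂ) (x : ℝ) : ℂ :=
  Complex.exp (Complex.I * (b * x - a * b / 2)) * f (x - a)

theorem norm_weylOp_apply (a b : ℝ) (f : ℝ → ℂ) (x : ℝ) :
    ‖weylOp a b f x‖ = ‖f (x - a)‖ := by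
  have hphase : (b * x - a * b / 2 : ℂ) = ((b * x - a * b / 2 : ℝ) : ℂ) := by push_cast; rfl
  rw [weylOp, norm_mul, hphase, Complex.norm_exp_I_mul_ofReal, one_mul]

theorem memLp_weylOp {f : ℝ → ℂ} {p : ENNReal} (hf : MemLp f p volume) (a b : ℝ) :
    MemLp (weylOp a b f) p volume := by
  have hshift : MemLp (fun x => f (x - a)) p volume :=
    hf.comp_measurePreserving (measurePreserving_sub_right volume a)
  have hphase : Continuous fun x : ℝ => Complex.exp (Complex.I * (b * x - a * b / 2)) := by
    fun_prop
  refine hshift.of_le (hphase.aestronglyMeasurable.mul hshift.1) ?_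
  exact Filter.Eventually.of_forall fun x => (norm_weylOp_apply a b f x).le

/-- The Weyl relation `D(a,b)* D(a',b') = e^{i(ab' - a'b)/2} D(a' - a, b' - b)`, read after the
substitution `x ↦ x + a`. -/
theorem conj_weylOp_mul_weylOp (a b a' b' : ℝ) (f : ℝ → ℂ) (x : ℝ) :
    conj (weylOp a b f (x + a)) * weylOp a' b' f (x + a) =
      Complex.exp (Complex.I * ((a * b' - a' * b) / 2)) *
        (conj (f x) * weylOp (a' - a) (b' - b) f x) := by
  simp only [weylOp, map_mul, ← Complex.exp_conj, map_sub, map_div₀, Complex.conj_I,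
    Complex.conj_ofReal, map_ofNat, add_sub_cancel_right, show x + a - a' = x - (a' - a) by ring]
  have hphase : Complex.exp (-Complex.I * (b * (x + a) - a * b / 2)) *
      Complex.exp (Complex.I * (b' * (x + a) - a' * b' / 2)) =
      Complex.exp (Complex.I * ((a * b' - a' * b) / 2)) *
        Complex.exp (Complex.I * ((b' - b) * x - (a' - a) * (b' - b) / 2)) := by
    rw [← Complex.exp_add, ← Complex.exp_add]
    congr 1
    ring
  push_cast
  linear_combination conj (f x) * f (x - (a' - a)) * hphase

theorem integral_conj_weylOp_mul_weylOp (a b a' b' : ℝ) (f : ℝ → ℂ) :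
    ∫ x, conj (weylOp a b f x) * weylOp a' b' f x =
      Complex.exp (Complex.I * ((a * b' - a' * b) / 2)) *
        ∫ x, conj (f x) * weylOp (a' - a) (b' - b) f x := by
  rw [← integral_const_mul, ← integral_add_right_eq_self _ a]
  simp only [conj_weylOp_mul_weylOp]

/-- The quantum Bochner theorem, easy direction, for pure states: the quantum characteristic
function `χ(a,b) = ⟨f, D(a,b) f⟩ = ∫ conj (f x) · exp(i(bx − ab/2)) · f(x − a) dx` of an
`L²` function `f` is `1`-positive definite: for all points `ξ_k = (a_k, b_k) ∈ ℝ²`, the matrix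
with entries `M_{k,l} = exp(i(a_k b_l − a_l b_k)/2) · χ(a_l − a_k, b_l − b_k)` is positive
semidefinite. -/
theorem quantum_bochner_easy (f : ℝ → ℂ) (hf : MemLp f 2 (volume : Measure ℝ))
    (χ : ℝ → ℝ → ℂ)
    (hχ : ∀ a b, χ a b =
      ∫ x : ℝ, (starRingEnd ℂ) (f x) * Complex.exp (Complex.I * (b * x - a * b / 2)) * f (x - a))
    (m : ℕ) (a b : Fin m → ℝ)
    (M : Matrix (Fin m) (Fin m) ℂ)
    (hM : ∀ k l, M k l =
      Complex.exp (Complex.I * ((a k * b l - a l * b k) / 2)) * χ (a l - a k) (b l - b k)) :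
    M.PosSemidef := by
  let displaced : Fin m → Lp ℂ 2 (volume : Measure ℝ) := fun k =>
    (memLp_weylOp hf (a k) (b k)).toLp _
  have hgram : M = Matrix.gram ℂ displaced := by
    ext k l
    rw [Matrix.gram_apply, MemLp.inner_toLp_toLp]
    simp only [RCLike.inner_apply']
    rw [integral_conj_weylOp_mul_weylOp, hM, hχ]
    simp only [weylOp, mul_assoc]
  exact hgram ▸ Matrix.posSemidef_gram ℂ displaced
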